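/- arXiv:1604.02578 — 2 statements merged into one kernel-verified Lean document; each statement's English description precedes it below -/
import Mathlib

section
/- Let (M_k)_{k≥1} be invertible real n×n matrices, (Ω_k)_{k≥0} real symmetric positive semi-definite n×n matrices, and P_0 a real symmetric positive definite n×n matrix. Define P_{k+1} = M_{k+1}(I + P_kΩ_k)⁻¹P_kM_{k+1}ᵀ. Let M_{k:l} = M_k⋯M_{l+1} (with M_{k:k} = I) and Γ_k = Σ_{l=0}^{k-1} M_{k:l}^{-ᵀ}Ω_lM_{k:l}^{-1}. Then every P_k is positive definite (hence invertible) and P_k⁻¹ = M_{k:0}^{-ᵀ}P_0⁻¹M_{k:0}^{-1} + Γ_k. -/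
open Matrix

/-- `Mres M l j` is the resolvent `M_{(l+j):l} = M_{l+j} ⋯ M_{l+1}`, so that
`M_{k:l} = Mres M l (k - l)` for `k ≥ l`, and `M_{k:k} = 1`. -/
def Mres {n : ℕ} (M : ℕ → Matrix (Fin n) (Fin n) ℝ) (l : ℕ) :
    ℕ → Matrix (Fin n) (Fin n) ℝ
  | 0 => 1
  | j + 1 => M (l + j + 1) * Mres M l j

/-- The information matrix `Γ_k = Σ_{l=0}^{k-1} M_{k:l}⁻ᵀ * Ω_l * M_{k:l}⁻¹`. -/
noncomputable def Gamma {n : ℕ} (M Ω : ℕ → Matrix (Fin n) (Fin n) ℝ) (k : ℕ) :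
    Matrix (Fin n) (Fin n) ℝ :=
  ∑ l ∈ Finset.range k, ((Mres M l (k - l))⁻¹)ᵀ * Ω l * (Mres M l (k - l))⁻¹

/-
The information matrices `P_k⁻¹` obey the linear recursion
`P_{k+1}⁻¹ = M_{k+1}⁻ᵀ (P_k⁻¹ + Ω_k) M_{k+1}⁻¹`, because `(I + P Ω)⁻¹ P = (P⁻¹ + Ω)⁻¹`.
Positive definiteness is preserved since `P⁻¹ + Ω` is positive definite and congruence by the
invertible `M_{k+1}` keeps it so. The closed form satisfies the same recursion, as
`M_{k+1:l} = M_{k+1} M_{k:l}`, so the two agree by induction on `k`.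
-/

namespace Matrix

variable {ι : Type*} [Fintype ι] [DecidableEq ι]

lemma PosDef.mul_mul_transpose_of_isUnit {A B : Matrix ι ι ℝ} (hA : A.PosDef) (hB : IsUnit B) :
    (B * A * Bᵀ).PosDef := by
  simpa [star_eq_conjTranspose] using hB.posDef_star_right_conjugate_iff.mpr hA

variable {K : Type*} [CommRing K]

lemma one_add_mul_inv_mul {P Ω : Matrix ι ι K} (hP : IsUnit P) :
    (1 + P * Ω)⁻¹ * P = (P⁻¹ + Ω)⁻¹ := by
  have hPdet := (isUnit_iff_isUnit_det P).mp hP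
  rw [← mul_nonsing_inv P hPdet, ← mul_add, Matrix.mul_inv_rev, mul_assoc,
    nonsing_inv_mul P hPdet, mul_one]

lemma inv_mul_inv_mul_transpose (M : Matrix ι ι K) {Q : Matrix ι ι K} (hQ : IsUnit Q) :
    (M * Q⁻¹ * Mᵀ)⁻¹ = M⁻¹ᵀ * Q * M⁻¹ := by
  rw [Matrix.mul_inv_rev, Matrix.mul_inv_rev,
    nonsing_inv_nonsing_inv Q ((isUnit_iff_isUnit_det Q).mp hQ), transpose_nonsing_inv, mul_assoc]

end Matrix

section Resolvent

variable {n : ℕ} (M Ω : ℕ → Matrix (Fin n) (Fin n) ℝ)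

lemma Mres_succ (l j : ℕ) : Mres M l (j + 1) = M (l + j + 1) * Mres M l j := rfl

lemma Mres_zero_succ (k : ℕ) : Mres M 0 (k + 1) = M (k + 1) * Mres M 0 k := by
  rw [Mres_succ, zero_add]

lemma Mres_sub_succ {l k : ℕ} (hl : l < k + 1) :
    Mres M l (k + 1 - l) = M (k + 1) * Mres M l (k - l) := by
  have hlk : l ≤ k := Nat.le_of_lt_succ hl
  rw [Nat.sub_add_comm hlk, Mres_succ, Nat.add_sub_cancel' hlk]

lemma Gamma_succ (k : ℕ) :
    Gamma M Ω (k + 1) = (M (k + 1))⁻¹ᵀ * (Gamma M Ω k + Ω k) * (M (k + 1))⁻¹ := by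
  have hlast : Mres M k (k + 1 - k) = M (k + 1) := by
    rw [Nat.add_sub_cancel_left, Mres_succ, add_zero, Mres, mul_one]
  have hterm (l : ℕ) (hl : l ∈ Finset.range k) :
      ((Mres M l (k + 1 - l))⁻¹)ᵀ * Ω l * (Mres M l (k + 1 - l))⁻¹
        = (M (k + 1))⁻¹ᵀ * (((Mres M l (k - l))⁻¹)ᵀ * Ω l * (Mres M l (k - l))⁻¹)
          * (M (k + 1))⁻¹ := by
    rw [Mres_sub_succ M (Nat.lt_succ_of_lt (Finset.mem_range.mp hl)), Matrix.mul_inv_rev,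
      transpose_mul]
    noncomm_ring
  rw [Gamma, Gamma, Finset.sum_range_succ, hlast, Finset.sum_congr rfl hterm, ← Finset.sum_mul,
    ← Finset.mul_sum, ← add_mul, ← mul_add]

end Resolvent

/-- Information-filter form of the perfect-model Kalman filter: if `P_0` is
positive definite, every `P_k` is positive definite and
`P_k⁻¹ = M_{k:0}⁻ᵀ * P_0⁻¹ * M_{k:0}⁻¹ + Γ_k`. -/
theorem kf_information_filter {n : ℕ}
    (M Ω : ℕ → Matrix (Fin n) (Fin n) ℝ)
    (hM : ∀ k, 1 ≤ k → IsUnit (M k)) (hΩ : ∀ k, (Ω k).PosSemidef)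
    (P : ℕ → Matrix (Fin n) (Fin n) ℝ) (hP0 : (P 0).PosDef)
    (hrec : ∀ k, P (k + 1)
      = M (k + 1) * (1 + P k * Ω k)⁻¹ * P k * (M (k + 1))ᵀ) :
    ∀ k, (P k).PosDef ∧
      (P k)⁻¹ = ((Mres M 0 k)⁻¹)ᵀ * (P 0)⁻¹ * (Mres M 0 k)⁻¹ + Gamma M Ω k := by
  intro k
  induction k with
  | zero => exact ⟨hP0, by simp [Mres, Gamma]⟩
  | succ k ih =>
    obtain ⟨hPk, hinv⟩ := ih
    have hQ : ((P k)⁻¹ + Ω k).PosDef := hPk.inv.add_posSemidef (hΩ k)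
    have hforecast : P (k + 1) = M (k + 1) * ((P k)⁻¹ + Ω k)⁻¹ * (M (k + 1))ᵀ := by
      rw [hrec, mul_assoc (M (k + 1)), one_add_mul_inv_mul hPk.isUnit]
    refine ⟨hforecast ▸ hQ.inv.mul_mul_transpose_of_isUnit (hM _ k.succ_pos), ?_⟩
    rw [hforecast, inv_mul_inv_mul_transpose _ hQ.isUnit, hinv, Gamma_succ, Mres_zero_succ,
      Matrix.mul_inv_rev, transpose_mul]
    noncomm_ring
end

section
/- Let (M_k)_{k≥1} be invertible real n×n matrices, (Ω_k)_{k≥0} real symmetric positive semi-definite n×n matrices, and P_0 a real symmetric positive semi-definite n×n matrix. Define P_{k+1} = M_{k+1}(I + P_kΩ_k)⁻¹P_kM_{k+1}ᵀ and M_{k:0} = M_k⋯M_1. Then for every k ≥ 0 and every vector h ∈ ℝⁿ, hᵀP_kh ≤ σ₁⁰·‖M_{k:0}ᵀh‖², where σ₁⁰ is the largest eigenvalue of P_0 and ‖·‖ is the Euclidean norm. -/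
/-!
Write `P = Bᵀ B`. The push-through identity `(1 + XY)⁻¹ X = X (1 + YX)⁻¹` turns the analysis step
into `(1 + PΩ)⁻¹ P = Bᵀ (1 + BΩBᵀ)⁻¹ B`, and since `(1 + C)⁻¹ ≤ 1` for `C ≥ 0` this matrix is
positive semidefinite and dominated by `P`. Hence each forecast step gives
`hᵀ P_{k+1} h ≤ (M_{k+1}ᵀ h)ᵀ P_k (M_{k+1}ᵀ h)`; iterating yields
`hᵀ P_k h ≤ (M_{k:0}ᵀ h)ᵀ P_0 (M_{k:0}ᵀ h)`, and the Rayleigh quotient of `P_0` is at most `σ₁⁰`.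
-/

open Matrix

namespace Matrix

variable {n : Type*} [Fintype n]

theorem dotProduct_transpose_mul_mul_mulVec {m R : Type*} [Fintype m] [CommSemiring R]
    (N : Matrix m n R) (A : Matrix m m R) (x : n → R) :
    x ⬝ᵥ ((Nᵀ * A * N) *ᵥ x) = (N *ᵥ x) ⬝ᵥ (A *ᵥ (N *ᵥ x)) := by
  rw [← mulVec_mulVec, ← mulVec_mulVec, dotProduct_mulVec, vecMul_transpose]

variable [DecidableEq n]

theorem inv_one_add_mul_mul_eq_mul_inv_one_add_mul {R : Type*} [CommRing R] (A B : Matrix n n R) :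
    (1 + A * B)⁻¹ * A = A * (1 + B * A)⁻¹ := by
  have hdet : (1 + A * B).det = (1 + B * A).det := det_one_add_mul_comm A B
  by_cases h : IsUnit (1 + B * A).det
  · have hAB : IsUnit (1 + A * B).det := hdet ▸ h
    calc (1 + A * B)⁻¹ * A = (1 + A * B)⁻¹ * (A * (1 + B * A)) * (1 + B * A)⁻¹ := by
          rw [Matrix.mul_assoc _ (A * _), Matrix.mul_assoc A, mul_nonsing_inv _ h, Matrix.mul_one]
      _ = (1 + A * B)⁻¹ * (1 + A * B) * A * (1 + B * A)⁻¹ := by noncomm_ring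
      _ = A * (1 + B * A)⁻¹ := by rw [nonsing_inv_mul _ hAB, Matrix.one_mul]
  · -- both inverses are the junk value `0`
    rw [nonsing_inv_apply_not_isUnit _ h, nonsing_inv_apply_not_isUnit _ (hdet ▸ h),
      Matrix.zero_mul, Matrix.mul_zero]

theorem inv_one_add_transpose_mul_self_mul {R : Type*} [CommRing R] (B Ω : Matrix n n R) :
    (1 + Bᵀ * B * Ω)⁻¹ * (Bᵀ * B) = Bᵀ * (1 + B * Ω * Bᵀ)⁻¹ * B := by
  rw [← Matrix.mul_assoc, Matrix.mul_assoc Bᵀ B Ω, inv_one_add_mul_mul_eq_mul_inv_one_add_mul,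
    Matrix.mul_assoc B]

theorem PosSemidef.exists_eq_transpose_mul_self {P : Matrix n n ℝ} (hP : P.PosSemidef) :
    ∃ B : Matrix n n ℝ, P = Bᵀ * B := by
  open scoped MatrixOrder in
  refine ⟨CFC.sqrt P, ?_⟩
  rw [← conjTranspose_eq_transpose_of_trivial, (CFC.sqrt_nonneg P).posSemidef.isHermitian.eq,
    CFC.sqrt_mul_sqrt_self P hP.nonneg]

theorem PosSemidef.dotProduct_inv_one_add_mulVec_le {C : Matrix n n ℝ} (hC : C.PosSemidef)
    (x : n → ℝ) : x ⬝ᵥ ((1 + C)⁻¹ *ᵥ x) ≤ x ⬝ᵥ x := by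
  have hunit : IsUnit (1 + C).det :=
    (isUnit_iff_isUnit_det _).mp (PosDef.one.add_posSemidef hC).isUnit
  set w := (1 + C)⁻¹ *ᵥ x
  have hx : x = w + C *ᵥ w :=
    calc x = ((1 + C) * (1 + C)⁻¹) *ᵥ x := by rw [mul_nonsing_inv _ hunit, one_mulVec]
      _ = w + C *ᵥ w := by rw [← mulVec_mulVec, add_mulVec, one_mulVec]
  have hCw : 0 ≤ w ⬝ᵥ (C *ᵥ w) := by simpa using hC.dotProduct_mulVec_nonneg w
  have hsq : 0 ≤ (C *ᵥ w) ⬝ᵥ (C *ᵥ w) := by simpa using dotProduct_star_self_nonneg (C *ᵥ w)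
  rw [hx]
  simp only [add_dotProduct, dotProduct_add, dotProduct_comm (C *ᵥ w) w]
  linarith

theorem PosSemidef.inv_one_add_mul_mul {P Ω : Matrix n n ℝ} (hP : P.PosSemidef)
    (hΩ : Ω.PosSemidef) : ((1 + P * Ω)⁻¹ * P).PosSemidef := by
  obtain ⟨B, rfl⟩ := hP.exists_eq_transpose_mul_self
  have hC : (B * Ω * Bᵀ).PosSemidef := by simpa using hΩ.mul_mul_conjTranspose_same B
  rw [inv_one_add_transpose_mul_self_mul]
  simpa using (PosDef.one.add_posSemidef hC).inv.posSemidef.conjTranspose_mul_mul_same B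

theorem PosSemidef.dotProduct_inv_one_add_mul_mul_mulVec_le {P Ω : Matrix n n ℝ}
    (hP : P.PosSemidef) (hΩ : Ω.PosSemidef) (x : n → ℝ) :
    x ⬝ᵥ (((1 + P * Ω)⁻¹ * P) *ᵥ x) ≤ x ⬝ᵥ (P *ᵥ x) := by
  obtain ⟨B, rfl⟩ := hP.exists_eq_transpose_mul_self
  have hC : (B * Ω * Bᵀ).PosSemidef := by simpa using hΩ.mul_mul_conjTranspose_same B
  rw [inv_one_add_transpose_mul_self_mul]
  calc x ⬝ᵥ ((Bᵀ * (1 + B * Ω * Bᵀ)⁻¹ * B) *ᵥ x)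
      = (B *ᵥ x) ⬝ᵥ ((1 + B * Ω * Bᵀ)⁻¹ *ᵥ (B *ᵥ x)) := dotProduct_transpose_mul_mul_mulVec _ _ _
    _ ≤ (B *ᵥ x) ⬝ᵥ (B *ᵥ x) := hC.dotProduct_inv_one_add_mulVec_le _
    _ = x ⬝ᵥ ((Bᵀ * B) *ᵥ x) := by simpa using (dotProduct_transpose_mul_mul_mulVec B 1 x).symm

open scoped MatrixOrder in
theorem IsHermitian.dotProduct_mulVec_le_iSup_eigenvalues {A : Matrix n n ℝ} (hA : A.IsHermitian)
    (x : n → ℝ) : x ⬝ᵥ (A *ᵥ x) ≤ (⨆ i, hA.eigenvalues i) * (x ⬝ᵥ x) := by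
  have hle : A ≤ algebraMap ℝ _ (⨆ i, hA.eigenvalues i) := by
    refine le_algebraMap_of_spectrum_le (fun r hr => ?_) hA.isSelfAdjoint
    obtain ⟨i, rfl⟩ := hA.spectrum_real_eq_range_eigenvalues ▸ hr
    exact le_ciSup (Set.finite_range _).bddAbove i
  have := (le_iff.mp hle).dotProduct_mulVec_nonneg x
  rw [star_trivial, Algebra.algebraMap_eq_smul_one, sub_mulVec, smul_mulVec, one_mulVec,
    dotProduct_sub, dotProduct_smul, smul_eq_mul] at this
  linarith

end Matrix

section KalmanForecast

variable {n : Type*} [Fintype n] [DecidableEq n]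

noncomputable def kalmanForecast (M Ω P : Matrix n n ℝ) : Matrix n n ℝ :=
  M * (1 + P * Ω)⁻¹ * P * Mᵀ

theorem Matrix.PosSemidef.kalmanForecast {P Ω : Matrix n n ℝ} (hP : P.PosSemidef)
    (hΩ : Ω.PosSemidef) (M : Matrix n n ℝ) : (kalmanForecast M Ω P).PosSemidef := by
  simpa [_root_.kalmanForecast, Matrix.mul_assoc] using
    (hP.inv_one_add_mul_mul hΩ).mul_mul_conjTranspose_same M

theorem dotProduct_kalmanForecast_mulVec_le {P Ω : Matrix n n ℝ} (hP : P.PosSemidef)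
    (hΩ : Ω.PosSemidef) (M : Matrix n n ℝ) (h : n → ℝ) :
    h ⬝ᵥ (kalmanForecast M Ω P *ᵥ h) ≤ (Mᵀ *ᵥ h) ⬝ᵥ (P *ᵥ (Mᵀ *ᵥ h)) := by
  have hconj : kalmanForecast M Ω P = Mᵀᵀ * ((1 + P * Ω)⁻¹ * P) * Mᵀ := by
    rw [transpose_transpose, kalmanForecast, Matrix.mul_assoc M]
  rw [hconj, dotProduct_transpose_mul_mul_mulVec]
  exact hP.dotProduct_inv_one_add_mul_mul_mulVec_le hΩ _

theorem posSemidef_of_kalmanForecast_recurrence {M Ω P : ℕ → Matrix n n ℝ}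
    (hΩ : ∀ k, (Ω k).PosSemidef)
    (hrec : ∀ k, P (k + 1) = kalmanForecast (M (k + 1)) (Ω k) (P k)) (hP0 : (P 0).PosSemidef) :
    ∀ k, (P k).PosSemidef
  | 0 => hP0
  | k + 1 => hrec k ▸ (posSemidef_of_kalmanForecast_recurrence hΩ hrec hP0 k).kalmanForecast
      (hΩ k) _

end KalmanForecast

theorem dotProduct_mulVec_le_of_kalmanForecast_recurrence {n : ℕ}
    {M Ω P : ℕ → Matrix (Fin n) (Fin n) ℝ} (hΩ : ∀ k, (Ω k).PosSemidef)
    (hrec : ∀ k, P (k + 1) = kalmanForecast (M (k + 1)) (Ω k) (P k)) (hP0 : (P 0).PosSemidef)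
    (k : ℕ) (h : Fin n → ℝ) :
    h ⬝ᵥ (P k *ᵥ h) ≤ ((Mres M 0 k)ᵀ *ᵥ h) ⬝ᵥ (P 0 *ᵥ ((Mres M 0 k)ᵀ *ᵥ h)) := by
  induction k generalizing h with
  | zero => simp [Mres]
  | succ k ih =>
    have hMres : (Mres M 0 (k + 1))ᵀ *ᵥ h = (Mres M 0 k)ᵀ *ᵥ ((M (k + 1))ᵀ *ᵥ h) := by
      rw [Mres, Nat.zero_add, transpose_mul, mulVec_mulVec]
    rw [hrec, hMres]
    exact (dotProduct_kalmanForecast_mulVec_le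
      (posSemidef_of_kalmanForecast_recurrence hΩ hrec hP0 k) (hΩ k) _ h).trans (ih _)

theorem kf_weak_collapse_bound_general {n : ℕ}
    (M Ω : ℕ → Matrix (Fin n) (Fin n) ℝ)
    (hΩ : ∀ k, (Ω k).PosSemidef)
    (P : ℕ → Matrix (Fin n) (Fin n) ℝ) (hP0 : (P 0).PosSemidef)
    (hrec : ∀ k, P (k + 1)
      = M (k + 1) * (1 + P k * Ω k)⁻¹ * P k * (M (k + 1))ᵀ) :
    ∀ k, ∀ h : Fin n → ℝ,
      h ⬝ᵥ ((P k) *ᵥ h)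
        ≤ (⨆ i, hP0.isHermitian.eigenvalues i)
          * (((Mres M 0 k)ᵀ *ᵥ h) ⬝ᵥ ((Mres M 0 k)ᵀ *ᵥ h)) := fun k h =>
  (dotProduct_mulVec_le_of_kalmanForecast_recurrence hΩ hrec hP0 k h).trans
    (hP0.isHermitian.dotProduct_mulVec_le_iSup_eigenvalues _)

/-- Quantitative weak-collapse bound for the perfect-model Kalman filter:
for every `k` and every vector `h`, `hᵀ P_k h ≤ σ₁⁰ * ‖M_{k:0}ᵀ h‖²`, where
`σ₁⁰` is the largest eigenvalue of `P_0` and the Euclidean norm squared of a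
vector `v` is written as `v ⬝ᵥ v`. -/
theorem kf_weak_collapse_bound {n : ℕ}
    (M Ω : ℕ → Matrix (Fin n) (Fin n) ℝ)
    (hM : ∀ k, 1 ≤ k → IsUnit (M k)) (hΩ : ∀ k, (Ω k).PosSemidef)
    (P : ℕ → Matrix (Fin n) (Fin n) ℝ) (hP0 : (P 0).PosSemidef)
    (hrec : ∀ k, P (k + 1)
      = M (k + 1) * (1 + P k * Ω k)⁻¹ * P k * (M (k + 1))ᵀ) :
    ∀ k, ∀ h : Fin n → ℝ,
      h ⬝ᵥ ((P k) *ᵥ h)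
        ≤ (⨆ i, hP0.isHermitian.eigenvalues i)
          * (((Mres M 0 k)ᵀ *ᵥ h) ⬝ᵥ ((Mres M 0 k)ᵀ *ᵥ h)) :=
  kf_weak_collapse_bound_general M Ω hΩ P hP0 hrec
end
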